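/- For all m, n ≥ 1, if x ∈ Lie(m) and y ∈ Lie(n), then x⋆y − y⋆x ∈ Lie(m+n); that is, the direct sum Lie = ⊕_{n≥1} Lie(n) is closed under the convolution bracket [x,y]_⋆ = x⋆y − y⋆x. -/

import Mathlib

/-- The free module on words of positive integers, with coefficients in `R`.
`ℚ[S_n]` is identified with the span of the permutation words of {1,…,n}. -/
abbrev FW (R : Type) [CommRing R] := (List ℕ) →₀ R

variable {R : Type} [CommRing R]

/-- Concatenation product, extended bilinearly. -/
noncomputable def catW (x y : FW R) : FW R :=
  x.sum fun u a => y.sum fun v b => Finsupp.single (u ++ v) (a * b)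

/-- The bracket [x,y] = x·y − y·x of the concatenation product. -/
noncomputable def brakW (x y : FW R) : FW R := catW x y - catW y x

/-- (Incomplete) binary trees; `nil` is the empty tree. The complete binary tree with
`t.nodes + 1` leaves whose internal nodes form `t` is implicit in the definitions below. -/
inductive BT
  | nil : BT
  | nd : BT → BT → BT
deriving DecidableEq

/-- Number of nodes of a binary tree. -/
def BT.nodes : BT → ℕ
  | .nil => 0
  | .nd l r => l.nodes + r.nodes + 1

/-- The evaluation T(σ) of the complete binary tree `T` whose internal nodes form `t`, with
leaves labelled left to right by the word `w`: each leaf gets the one-letter word of its label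
and each internal node the bracket of concatenation. -/
noncomputable def evalBT : BT → List ℕ → FW R
  | .nil, w => Finsupp.single w 1
  | .nd l r, w => brakW (evalBT l (w.take (l.nodes + 1))) (evalBT r (w.drop (l.nodes + 1)))

/-- The standardization of a word with distinct letters: each letter is replaced by its rank. -/
def stdW (w : List ℕ) : List ℕ := w.map fun x => (w.filter (· ≤ x)).length

/-- The set of permutation words of {1, …, n}. -/
def permWords (n : ℕ) : Finset (List ℕ) := (List.range' 1 n).permutations.toFinset

/-- Convolution α⋆β of two permutation words: the sum of all permutation words γ of size
|α|+|β| with std(γ(1)⋯γ(m)) = α and std(γ(m+1)⋯γ(m+n)) = β. -/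
noncomputable def convW (u v : List ℕ) : FW R :=
  ∑ γ ∈ (permWords (u.length + v.length)).filter
      (fun γ => stdW (γ.take u.length) = u ∧ stdW (γ.drop u.length) = v),
    Finsupp.single γ 1

/-- The convolution product, extended bilinearly. -/
noncomputable def starW (x y : FW R) : FW R :=
  x.sum fun u a => y.sum fun v b => (a * b) • convW u v

/-- Whether the word `w` is an admissible labelling of (the completion of) `t`: at each internal
node, the smallest label lies in the left subtree and the largest in the right subtree. -/
def admB : BT → List ℕ → Bool
  | .nil, _ => true
  | .nd l r, w =>
    admB l (w.take (l.nodes + 1)) && admB r (w.drop (l.nodes + 1))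
      && decide ((w.take (l.nodes + 1)).minimum = w.minimum)
      && decide ((w.drop (l.nodes + 1)).maximum = w.maximum)

/-- c_t: the sum of the evaluations T(σ) over all admissible labellings σ of the complete
binary tree whose internal nodes form `t`. -/
noncomputable def cElt (t : BT) : FW R :=
  ∑ w ∈ (permWords (t.nodes + 1)).filter (fun w => admB t w = true), evalBT t w

/-- Lie(n): the linear span of the evaluations T(σ) over all complete binary trees with n
leaves and all permutations σ ∈ S_n. -/
noncomputable def LieN (n : ℕ) : Submodule ℚ (FW ℚ) :=
  Submodule.span ℚ {x | ∃ t : BT, ∃ w ∈ permWords n, t.nodes + 1 = n ∧ x = evalBT t w}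

/-!
The bracket `x ⋆ y - y ⋆ x` is bilinear, so it suffices to take generators `x = T(α)`, `y = S(β)`.
For `u ∈ S_m`, `v ∈ S_n` the words in `u ⋆ v` are indexed by the `m`-subsets `A` of `{1,…,m+n}`:
the word is `u` relabelled increasingly by `A` followed by `v` relabelled by the complement `Aᶜ`.
Relabelling letters commutes with tree evaluation, and indexing the terms of `y ⋆ x` by the
complement of the letter set of `y` gives
`T(α) ⋆ S(β) - S(β) ⋆ T(α) = ∑_A [T(α↑A), S(β↑Aᶜ)] = ∑_A (T ∧ S)(α↑A · β↑Aᶜ)`,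
a sum of evaluations of the tree with left subtree `T` and right subtree `S`.
-/

open Finset

noncomputable def starBilin : FW R →ₗ[R] FW R →ₗ[R] FW R :=
  Finsupp.linearCombination R fun u => Finsupp.linearCombination R (convW u)

theorem starBilin_apply (x y : FW R) : starBilin x y = starW x y := by
  simp only [starBilin, starW, Finsupp.linearCombination_apply, LinearMap.finsupp_sum_apply,
    LinearMap.smul_apply, Finsupp.smul_sum, smul_smul]

theorem catW_mapDomain_mapDomain (f g : List ℕ → List ℕ) (x y : FW R) :
    catW (x.mapDomain f) (y.mapDomain g) =
      x.sum fun u a => y.sum fun v b => Finsupp.single (f u ++ g v) (a * b) := by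
  rw [catW, Finsupp.sum_mapDomain_index (by simp) (by simp [add_mul, Finsupp.sum_add])]
  refine Finsupp.sum_congr fun u _ => ?_
  rw [Finsupp.sum_mapDomain_index (by simp) (by simp [mul_add])]

theorem catW_mapDomain_map (g : ℕ → ℕ) (x y : FW R) :
    catW (x.mapDomain (List.map g)) (y.mapDomain (List.map g)) =
      (catW x y).mapDomain (List.map g) := by
  rw [catW_mapDomain_mapDomain, catW]
  simp only [Finsupp.mapDomain_sum, Finsupp.mapDomain_single, List.map_append]

theorem brakW_mapDomain_map (g : ℕ → ℕ) (x y : FW R) :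
    brakW (x.mapDomain (List.map g)) (y.mapDomain (List.map g)) =
      (brakW x y).mapDomain (List.map g) := by
  rw [brakW, brakW, catW_mapDomain_map, catW_mapDomain_map, Finsupp.mapDomain_sub]

theorem exists_append_of_mem_support_catW {x y : FW R} {w : List ℕ}
    (hw : w ∈ (catW x y).support) : ∃ u ∈ x.support, ∃ v ∈ y.support, w = u ++ v := by
  obtain ⟨u, hu, hw⟩ := Finset.mem_biUnion.mp (Finsupp.support_sum hw)
  obtain ⟨v, hv, hw⟩ := Finset.mem_biUnion.mp (Finsupp.support_sum hw)
  exact ⟨u, hu, v, hv, Finset.mem_singleton.mp (Finsupp.support_single_subset hw)⟩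

theorem mem_permWords_iff {w : List ℕ} {n : ℕ} :
    w ∈ permWords n ↔ w.Nodup ∧ w.toFinset = Icc 1 n := by
  rw [permWords, List.mem_toFinset, List.mem_permutations, ← List.toFinset_range'_1_1]
  refine ⟨fun h => ⟨h.nodup_iff.mpr List.nodup_range', List.toFinset_eq_of_perm _ _ h⟩,
    fun h => List.perm_of_nodup_nodup_toFinset_eq h.1 List.nodup_range' h.2⟩

theorem mem_permWords_of_perm {u w : List ℕ} {n : ℕ} (h : u.Perm w) (hw : w ∈ permWords n) :
    u ∈ permWords n := by
  rw [permWords, List.mem_toFinset, List.mem_permutations] at hw ⊢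
  exact h.trans hw

theorem length_of_mem_permWords {w : List ℕ} {n : ℕ} (hw : w ∈ permWords n) : w.length = n := by
  obtain ⟨hnd, hset⟩ := mem_permWords_iff.mp hw
  rw [← List.toFinset_card_of_nodup hnd, hset, Nat.card_Icc, Nat.add_sub_cancel]

theorem mem_Icc_of_mem_permWords {w : List ℕ} {n k : ℕ} (hw : w ∈ permWords n) (hk : k ∈ w) :
    k ∈ Icc 1 n :=
  (mem_permWords_iff.mp hw).2 ▸ List.mem_toFinset.mpr hk

theorem stdW_map_of_strictMonoOn {f : ℕ → ℕ} {w : List ℕ} (hf : StrictMonoOn f {x | x ∈ w}) :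
    stdW (w.map f) = stdW w := by
  simp only [stdW, List.map_map, List.filter_map, List.length_map]
  refine List.map_congr_left fun x hx => ?_
  simp only [Function.comp_apply]
  congr 1
  refine List.filter_congr fun y hy => ?_
  simp only [Function.comp_apply, decide_eq_decide]
  exact hf.le_iff_le hy hx

theorem stdW_eq_map_card_filter {w : List ℕ} (hw : w.Nodup) :
    stdW w = w.map fun x => #(w.toFinset.filter (· ≤ x)) := by
  refine List.map_congr_left fun x _ => ?_
  rw [← List.toFinset_card_of_nodup (hw.filter _), List.toFinset_filter]
  simp

theorem stdW_of_mem_permWords {u : List ℕ} {n : ℕ} (hu : u ∈ permWords n) : stdW u = u := by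
  obtain ⟨hnd, hset⟩ := mem_permWords_iff.mp hu
  rw [stdW_eq_map_card_filter hnd, hset]
  conv_rhs => rw [← List.map_id u]
  refine List.map_congr_left fun k hk => ?_
  have hk : k ≤ n := (Finset.mem_Icc.mp (mem_Icc_of_mem_permWords hu hk)).2
  rw [show (Icc 1 n).filter (· ≤ k) = Icc 1 k by ext; simp; omega, Nat.card_Icc,
    Nat.add_sub_cancel, id]

theorem eq_of_toFinset_eq_of_stdW_eq {w w' : List ℕ} (hw : w.Nodup) (hw' : w'.Nodup)
    (hset : w.toFinset = w'.toFinset) (hstd : stdW w = stdW w') : w = w' := by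
  rw [stdW_eq_map_card_filter hw, stdW_eq_map_card_filter hw', ← hset] at hstd
  have hrank : Set.InjOn (fun x => #(w.toFinset.filter (· ≤ x))) {x | x ∈ w} := by
    intro x hx y hy hxy
    by_contra hne
    wlog hlt : x < y generalizing x y
    · exact this hy hx hxy.symm (Ne.symm hne) (lt_of_le_of_ne (not_lt.mp hlt) (Ne.symm hne))
    refine (Finset.card_lt_card ?_).ne hxy
    refine (Finset.ssubset_iff_of_subset (Finset.monotone_filter_right _
      fun a _ (ha : a ≤ x) => ha.trans hlt.le)).mpr ⟨y, by simpa using hy, by simp [hlt]⟩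
  have hlen : w.length = w'.length := by simpa using congrArg List.length hstd
  refine List.ext_getElem hlen fun i h h' => hrank (List.getElem_mem h) ?_ ?_
  · rw [Set.mem_ofPred_eq, ← List.mem_toFinset, hset, List.mem_toFinset]
    exact List.getElem_mem h'
  · have := List.getElem_of_eq hstd (by simpa using h)
    simpa using this

/-- The `k`-th smallest element of `A`, counting from `1`. -/
noncomputable def orderedElem (A : Finset ℕ) (k : ℕ) : ℕ := (A.sort (· ≤ ·)).getD (k - 1) 0

theorem strictMonoOn_orderedElem (A : Finset ℕ) : StrictMonoOn (orderedElem A) (Set.Icc 1 #A) := by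
  intro j hj k hk hjk
  have hlen : (A.sort (· ≤ ·)).length = #A := Finset.length_sort _
  simp only [Set.mem_Icc] at hj hk
  rw [orderedElem, orderedElem, List.getD_eq_getElem _ _ (by omega),
    List.getD_eq_getElem _ _ (by omega)]
  exact List.pairwise_iff_getElem.mp (Finset.sortedLT_sort A).pairwise _ _ _ _ (by omega)

theorem image_orderedElem_Icc (A : Finset ℕ) : (Icc 1 #A).image (orderedElem A) = A := by
  ext a
  rw [Finset.mem_image, ← Finset.mem_sort (· ≤ ·), List.mem_iff_getElem]
  simp only [Finset.mem_Icc, Finset.length_sort]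
  constructor
  · rintro ⟨k, hk, rfl⟩
    exact ⟨k - 1, by omega, (List.getD_eq_getElem _ _ _).symm⟩
  · rintro ⟨i, hi, rfl⟩
    exact ⟨i + 1, by omega, List.getD_eq_getElem _ _ _⟩

section Relabel

variable {A : Finset ℕ} {u : List ℕ}

theorem nodup_map_orderedElem (hu : u ∈ permWords #A) : (u.map (orderedElem A)).Nodup := by
  refine (mem_permWords_iff.mp hu).1.map_on fun j hj k hk =>
    (strictMonoOn_orderedElem A).injOn ?_ ?_
  · simpa using mem_Icc_of_mem_permWords hu hj
  · simpa using mem_Icc_of_mem_permWords hu hk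

theorem toFinset_map_orderedElem (hu : u ∈ permWords #A) :
    (u.map (orderedElem A)).toFinset = A := by
  calc (u.map (orderedElem A)).toFinset = u.toFinset.image (orderedElem A) := by ext; simp
    _ = A := by rw [(mem_permWords_iff.mp hu).2, image_orderedElem_Icc]

theorem stdW_map_orderedElem (hu : u ∈ permWords #A) : stdW (u.map (orderedElem A)) = u := by
  rw [stdW_map_of_strictMonoOn, stdW_of_mem_permWords hu]
  exact (strictMonoOn_orderedElem A).mono fun k hk => by
    simpa using mem_Icc_of_mem_permWords hu hk

end Relabel

theorem toFinset_drop_of_nodup {l : List ℕ} (hl : l.Nodup) (m : ℕ) :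
    (l.drop m).toFinset = l.toFinset \ (l.take m).toFinset := by
  ext x
  simp only [List.mem_toFinset, Finset.mem_sdiff]
  refine ⟨fun hx => ⟨List.mem_of_mem_drop hx, fun hx' => List.disjoint_take_drop hl le_rfl hx' hx⟩,
    fun ⟨hx, hx'⟩ => ?_⟩
  rw [← List.take_append_drop m l, List.mem_append] at hx
  exact hx.resolve_left hx'

/-- The words occurring in the convolution `u ⋆ v`, indexed by the letter set `A` of their first
factor. -/
noncomputable def shuffleW (N : ℕ) (A : Finset ℕ) (u v : List ℕ) : List ℕ :=
  u.map (orderedElem A) ++ v.map (orderedElem (Icc 1 N \ A))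

section Shuffle

variable {m n : ℕ} {A : Finset ℕ} {u v : List ℕ}

theorem card_Icc_sdiff_of_mem_powersetCard (hA : A ∈ powersetCard m (Icc 1 (m + n))) :
    #(Icc 1 (m + n) \ A) = n := by
  obtain ⟨hsub, hcard⟩ := Finset.mem_powersetCard.mp hA
  rw [Finset.card_sdiff_of_subset hsub, Nat.card_Icc, hcard]
  omega

theorem shuffleW_mem_permWords (hA : A ∈ powersetCard m (Icc 1 (m + n)))
    (hu : u ∈ permWords m) (hv : v ∈ permWords n) : shuffleW (m + n) A u v ∈ permWords (m + n) := by
  obtain ⟨hsub, hcard⟩ := Finset.mem_powersetCard.mp hA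
  rw [← hcard] at hu
  rw [← card_Icc_sdiff_of_mem_powersetCard hA] at hv
  have hset_u := toFinset_map_orderedElem hu
  have hset_v := toFinset_map_orderedElem hv
  refine mem_permWords_iff.mpr ⟨List.nodup_append'.mpr ⟨nodup_map_orderedElem hu,
    nodup_map_orderedElem hv, fun x hxu hxv => ?_⟩, ?_⟩
  · rw [← List.mem_toFinset, hset_u] at hxu
    rw [← List.mem_toFinset, hset_v] at hxv
    exact (Finset.mem_sdiff.mp hxv).2 hxu
  · rw [shuffleW, List.toFinset_append, hset_u, hset_v, Finset.union_sdiff_of_subset hsub]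

theorem stdW_take_shuffleW (hA : A ∈ powersetCard m (Icc 1 (m + n)))
    (hu : u ∈ permWords m) : stdW ((shuffleW (m + n) A u v).take m) = u := by
  rw [shuffleW, List.take_left' (by rw [List.length_map, length_of_mem_permWords hu]),
    stdW_map_orderedElem ((Finset.mem_powersetCard.mp hA).2.symm ▸ hu)]

theorem stdW_drop_shuffleW (hA : A ∈ powersetCard m (Icc 1 (m + n)))
    (hu : u ∈ permWords m) (hv : v ∈ permWords n) : stdW ((shuffleW (m + n) A u v).drop m) = v := by
  rw [shuffleW, List.drop_left' (by rw [List.length_map, length_of_mem_permWords hu]),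
    stdW_map_orderedElem ((card_Icc_sdiff_of_mem_powersetCard hA).symm ▸ hv)]

theorem toFinset_take_shuffleW (hA : A ∈ powersetCard m (Icc 1 (m + n)))
    (hu : u ∈ permWords m) : ((shuffleW (m + n) A u v).take m).toFinset = A := by
  rw [shuffleW, List.take_left' (by rw [List.length_map, length_of_mem_permWords hu]),
    toFinset_map_orderedElem ((Finset.mem_powersetCard.mp hA).2.symm ▸ hu)]

theorem toFinset_take_mem_powersetCard {γ : List ℕ} (hγ : γ ∈ permWords (m + n)) :
    (γ.take m).toFinset ∈ powersetCard m (Icc 1 (m + n)) := by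
  obtain ⟨hnd, hset⟩ := mem_permWords_iff.mp hγ
  refine Finset.mem_powersetCard.mpr ⟨hset ▸ fun x hx =>
    List.mem_toFinset.mpr (List.mem_of_mem_take (List.mem_toFinset.mp hx)), ?_⟩
  rw [List.toFinset_card_of_nodup (hnd.sublist (List.take_sublist m γ)), List.length_take,
    length_of_mem_permWords hγ]
  omega

theorem shuffleW_toFinset_take {γ : List ℕ} (hγ : γ ∈ permWords (m + n))
    (hu : u ∈ permWords m) (hv : v ∈ permWords n)
    (htake : stdW (γ.take m) = u) (hdrop : stdW (γ.drop m) = v) :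
    shuffleW (m + n) (γ.take m).toFinset u v = γ := by
  obtain ⟨hnd, hset⟩ := mem_permWords_iff.mp hγ
  have hnd_take := hnd.sublist (List.take_sublist m γ)
  have hnd_drop := hnd.sublist (List.drop_sublist m γ)
  have hA := toFinset_take_mem_powersetCard hγ
  have hcompl : Icc 1 (m + n) \ (γ.take m).toFinset = (γ.drop m).toFinset := by
    rw [← hset, toFinset_drop_of_nodup hnd]
  rw [← (Finset.mem_powersetCard.mp hA).2] at hu
  rw [← card_Icc_sdiff_of_mem_powersetCard hA, hcompl] at hv
  rw [shuffleW, hcompl]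
  conv_rhs => rw [← List.take_append_drop m γ]
  congr 1
  · exact eq_of_toFinset_eq_of_stdW_eq (nodup_map_orderedElem hu) hnd_take
      (toFinset_map_orderedElem hu) (by rw [stdW_map_orderedElem hu, htake])
  · exact eq_of_toFinset_eq_of_stdW_eq (nodup_map_orderedElem hv) hnd_drop
      (toFinset_map_orderedElem hv) (by rw [stdW_map_orderedElem hv, hdrop])

theorem convW_eq_sum_shuffleW (hu : u ∈ permWords m) (hv : v ∈ permWords n) :
    convW (R := R) u v =
      ∑ A ∈ powersetCard m (Icc 1 (m + n)), Finsupp.single (shuffleW (m + n) A u v) 1 := by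
  rw [convW, length_of_mem_permWords hu, length_of_mem_permWords hv]
  refine Finset.sum_nbij' (fun γ => (γ.take m).toFinset) (fun A => shuffleW (m + n) A u v)
    (fun γ hγ => toFinset_take_mem_powersetCard (Finset.mem_filter.mp hγ).1) ?_ ?_ ?_ ?_
  · intro A hA
    exact Finset.mem_filter.mpr ⟨shuffleW_mem_permWords hA hu hv, stdW_take_shuffleW hA hu,
      stdW_drop_shuffleW hA hu hv⟩
  · intro γ hγ
    obtain ⟨hγ, htake, hdrop⟩ := Finset.mem_filter.mp hγ
    exact shuffleW_toFinset_take hγ hu hv htake hdrop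
  · intro A hA
    exact toFinset_take_shuffleW hA hu
  · intro γ hγ
    obtain ⟨hγ, htake, hdrop⟩ := Finset.mem_filter.mp hγ
    rw [shuffleW_toFinset_take hγ hu hv htake hdrop]

end Shuffle

theorem sum_powersetCard_sdiff {α M : Type*} [DecidableEq α] [AddCommMonoid M] {s : Finset α}
    {k l : ℕ} (h : k + l = #s) (f : Finset α → M) :
    ∑ B ∈ powersetCard l s, f B = ∑ A ∈ powersetCard k s, f (s \ A) := by
  have hmaps : ∀ {i j : ℕ}, i + j = #s → ∀ B ∈ powersetCard i s, s \ B ∈ powersetCard j s := by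
    intro i j hij B hB
    obtain ⟨hsub, hcard⟩ := Finset.mem_powersetCard.mp hB
    refine Finset.mem_powersetCard.mpr ⟨Finset.sdiff_subset, ?_⟩
    rw [Finset.card_sdiff_of_subset hsub]
    omega
  refine Finset.sum_nbij' (s \ ·) (s \ ·) (hmaps (by omega)) (hmaps h)
    (fun B hB => Finset.sdiff_sdiff_eq_self (Finset.mem_powersetCard.mp hB).1)
    (fun A hA => Finset.sdiff_sdiff_eq_self (Finset.mem_powersetCard.mp hA).1) fun B hB => ?_
  rw [Finset.sdiff_sdiff_eq_self (Finset.mem_powersetCard.mp hB).1]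

theorem evalBT_map (g : ℕ → ℕ) (t : BT) (w : List ℕ) :
    evalBT (R := R) t (w.map g) = (evalBT t w).mapDomain (List.map g) := by
  induction t generalizing w with
  | nil => rw [evalBT, evalBT, Finsupp.mapDomain_single]
  | nd l r ihl ihr =>
    rw [evalBT, evalBT, ← List.map_take, ← List.map_drop, ihl, ihr, brakW_mapDomain_map]

theorem perm_of_mem_support_evalBT {t : BT} {w u : List ℕ}
    (hu : u ∈ (evalBT (R := R) t w).support) : u.Perm w := by
  induction t generalizing w u with
  | nil => rw [Finset.mem_singleton.mp (Finsupp.support_single_subset hu)]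
  | nd l r ihl ihr =>
    have hsplit := List.take_append_drop (l.nodes + 1) w
    rcases Finset.mem_union.mp (Finsupp.support_sub hu) with h | h
    · obtain ⟨a, ha, b, hb, rfl⟩ := exists_append_of_mem_support_catW h
      exact ((ihl ha).append (ihr hb)).trans (by rw [hsplit])
    · obtain ⟨b, hb, a, ha, rfl⟩ := exists_append_of_mem_support_catW h
      exact ((ihr hb).append (ihl ha)).trans (List.perm_append_comm.trans (by rw [hsplit]))

theorem evalBT_nd_append (t s : BT) {u : List ℕ} (v : List ℕ) (hu : u.length = t.nodes + 1) :
    evalBT (R := R) (.nd t s) (u ++ v) = brakW (evalBT t u) (evalBT s v) := by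
  rw [evalBT, List.take_left' hu, List.drop_left' hu]

theorem starW_eq_sum_catW {m n : ℕ} {x y : FW R} (hx : ∀ u ∈ x.support, u ∈ permWords m)
    (hy : ∀ v ∈ y.support, v ∈ permWords n) :
    starW x y = ∑ A ∈ powersetCard m (Icc 1 (m + n)),
      catW (x.mapDomain (List.map (orderedElem A)))
        (y.mapDomain (List.map (orderedElem (Icc 1 (m + n) \ A)))) := by
  calc starW x y = ∑ u ∈ x.support, ∑ v ∈ y.support, ∑ A ∈ powersetCard m (Icc 1 (m + n)),
        Finsupp.single (shuffleW (m + n) A u v) (x u * y v) := by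
        refine Finset.sum_congr rfl fun u hu => Finset.sum_congr rfl fun v hv => ?_
        dsimp only
        rw [convW_eq_sum_shuffleW (hx u hu) (hy v hv), Finset.smul_sum]
        simp only [Finsupp.smul_single, smul_eq_mul, mul_one]
    _ = ∑ A ∈ powersetCard m (Icc 1 (m + n)), ∑ u ∈ x.support, ∑ v ∈ y.support,
        Finsupp.single (shuffleW (m + n) A u v) (x u * y v) :=
        (Finset.sum_congr rfl fun _ _ => Finset.sum_comm).trans Finset.sum_comm
    _ = _ := by simp only [catW_mapDomain_mapDomain]; rfl

section Bracket

variable {t s : BT} {α β : List ℕ}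

theorem mem_permWords_of_mem_support_evalBT {n : ℕ} (hα : α ∈ permWords n) :
    ∀ u ∈ (evalBT (R := R) t α).support, u ∈ permWords n := fun _ hu =>
  mem_permWords_of_perm (perm_of_mem_support_evalBT hu) hα

theorem starW_evalBT_sub_starW (hα : α ∈ permWords (t.nodes + 1))
    (hβ : β ∈ permWords (s.nodes + 1)) :
    starW (evalBT (R := R) t α) (evalBT s β) - starW (evalBT s β) (evalBT t α) =
      ∑ A ∈ powersetCard (t.nodes + 1) (Icc 1 (t.nodes + 1 + (s.nodes + 1))),
        evalBT (.nd t s) (shuffleW (t.nodes + 1 + (s.nodes + 1)) A α β) := by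
  set m := t.nodes + 1
  set n := s.nodes + 1
  rw [starW_eq_sum_catW (mem_permWords_of_mem_support_evalBT hα)
      (mem_permWords_of_mem_support_evalBT hβ),
    starW_eq_sum_catW (mem_permWords_of_mem_support_evalBT hβ)
      (mem_permWords_of_mem_support_evalBT hα), Nat.add_comm n m,
    sum_powersetCard_sdiff (k := m) (l := n) (by rw [Nat.card_Icc]; omega),
    ← Finset.sum_sub_distrib]
  refine Finset.sum_congr rfl fun A hA => ?_
  rw [Finset.sdiff_sdiff_eq_self (Finset.mem_powersetCard.mp hA).1, shuffleW,
    evalBT_nd_append _ _ _ (by rw [List.length_map, length_of_mem_permWords hα]), brakW,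
    evalBT_map, evalBT_map]

theorem starW_evalBT_sub_starW_mem_LieN (hα : α ∈ permWords (t.nodes + 1))
    (hβ : β ∈ permWords (s.nodes + 1)) :
    starW (evalBT t α) (evalBT s β) - starW (evalBT s β) (evalBT t α) ∈
      LieN (t.nodes + 1 + (s.nodes + 1)) := by
  rw [starW_evalBT_sub_starW hα hβ]
  refine Submodule.sum_mem _ fun A hA => Submodule.subset_span
    ⟨.nd t s, _, shuffleW_mem_permWords hA hα hβ, ?_, rfl⟩
  simp only [BT.nodes]
  omega

end Bracket

theorem stmt6 : ∀ m n : ℕ, 1 ≤ m → 1 ≤ n → ∀ x y : FW ℚ,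
    x ∈ LieN m → y ∈ LieN n → starW x y - starW y x ∈ LieN (m + n) := by
  intro m n _ _ x y hx hy
  have hmem := Submodule.apply_mem_map₂ (starBilin - starBilin.flip) hx hy
  rw [LieN, LieN, Submodule.map₂_span_span] at hmem
  simp only [LinearMap.sub_apply, LinearMap.flip_apply, starBilin_apply] at hmem
  refine Submodule.span_le.mpr ?_ hmem
  rintro _ ⟨_, ⟨t, α, hα, rfl, rfl⟩, _, ⟨s, β, hβ, rfl, rfl⟩, rfl⟩
  simpa [starBilin_apply] using starW_evalBT_sub_starW_mem_LieN hα hβ
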